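/- Let 𝒢 be a torsion class in mod-Λ and θ a stability condition. Let 𝒫(θ) be the objects M with θ(M″) > 0 for all nonzero strict quotients M″ of M (including M itself), together with 0, and let 𝒬̄(θ) be the objects N with θ(N′) ≤ 0 for all strict subobjects N′ of N (including N). Then 𝒬̄(θ) = 𝒫(θ)⟂: an object Y ∈ 𝒢 lies in 𝒬̄(θ) if and only if there is no nonzero strict morphism from any object of 𝒫(θ) to Y. -/

import Mathlib

/-!
Common framework: a torsion class `𝒢` in `mod-Λ` is modelled as a predicate
`G : ModuleCat R → Prop` (closed under isomorphism, quotients and extensions).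
Strict subobjects, fibrations, cofibrations, strict morphisms, pseudo-torsion
classes etc. follow the definitions of the paper.
-/

namespace PaperTC

variable {R : Type} [Ring R]

/-- Membership of a (type-level) module in a class of modules. -/
def Mem (G : ModuleCat.{0} R → Prop) (M : Type) [AddCommGroup M] [Module R M] : Prop :=
  G (ModuleCat.of R M)

/-- `A` is a strict subobject of `M` (w.r.t. the torsion class `G`):
`A` lies in `G` and `A ⊓ B'` lies in `G` for every subobject `B'` of `M`. -/
def IsStrictSub (G : ModuleCat.{0} R → Prop) {M : Type} [AddCommGroup M] [Module R M]
    (A : Submodule R M) : Prop :=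
  Mem G ↥A ∧ ∀ B' : Submodule R M, Mem G ↥B' → Mem G ↥(A ⊓ B')

/-- A fibration is a surjection whose kernel is a strict subobject of the source. -/
def IsFibration (G : ModuleCat.{0} R → Prop) {M N : Type} [AddCommGroup M] [Module R M]
    [AddCommGroup N] [Module R N] (f : M →ₗ[R] N) : Prop :=
  Function.Surjective f ∧ IsStrictSub G (LinearMap.ker f)

/-- A strict morphism: kernel is a strict subobject of the source and image a
strict subobject of the target. -/
def IsStrictMorphism (G : ModuleCat.{0} R → Prop) {M N : Type} [AddCommGroup M] [Module R M]
    [AddCommGroup N] [Module R N] (f : M →ₗ[R] N) : Prop :=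
  IsStrictSub G (LinearMap.ker f) ∧ IsStrictSub G (LinearMap.range f)

/-- `G` is a torsion class in `mod-Λ`. -/
structure IsTorsionClass (G : ModuleCat.{0} R → Prop) : Prop where
  iso_closed : ∀ (M N : Type) [AddCommGroup M] [Module R M] [AddCommGroup N] [Module R N],
      (M ≃ₗ[R] N) → Mem G M → Mem G N
  zero_mem : ∀ (M : Type) [AddCommGroup M] [Module R M], Subsingleton M → Mem G M
  quot_closed : ∀ (M : Type) [AddCommGroup M] [Module R M] (N : Submodule R M),
      Mem G M → Mem G (M ⧸ N)
  ext_closed : ∀ (A B C : Type) [AddCommGroup A] [Module R A] [AddCommGroup B] [Module R B]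
      [AddCommGroup C] [Module R C] (f : A →ₗ[R] B) (g : B →ₗ[R] C),
      Function.Injective f → Function.Surjective g →
      LinearMap.range f = LinearMap.ker g → Mem G A → Mem G C → Mem G B

/-- A pseudo-torsion class `P` in the torsion class `G`: nonempty (contains zero
objects), closed under strict quotients and under strict extensions. -/
structure IsPseudoTorsionClass (G P : ModuleCat.{0} R → Prop) : Prop where
  subset : ∀ M : ModuleCat.{0} R, P M → G M
  zero_mem : ∀ (M : Type) [AddCommGroup M] [Module R M], Subsingleton M → Mem G M → Mem P M
  quot_closed : ∀ (M : Type) [AddCommGroup M] [Module R M] (A : Submodule R M),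
      IsStrictSub G A → Mem P M → Mem P (M ⧸ A)
  ext_closed : ∀ (A B C : Type) [AddCommGroup A] [Module R A] [AddCommGroup B] [Module R B]
      [AddCommGroup C] [Module R C] (f : A →ₗ[R] B) (g : B →ₗ[R] C),
      Function.Injective f → Function.Surjective g →
      LinearMap.range f = LinearMap.ker g → IsStrictSub G (LinearMap.range f) →
      Mem P A → Mem P C → Mem P B

/-- A pseudo-torsionfree class `Q` in the torsion class `G`. -/
structure IsPseudoTorsionFreeClass (G Q : ModuleCat.{0} R → Prop) : Prop where
  subset : ∀ M : ModuleCat.{0} R, Q M → G M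
  zero_mem : ∀ (M : Type) [AddCommGroup M] [Module R M], Subsingleton M → Mem G M → Mem Q M
  sub_closed : ∀ (M : Type) [AddCommGroup M] [Module R M] (A : Submodule R M),
      IsStrictSub G A → Mem Q M → Mem Q ↥A
  ext_closed : ∀ (A B C : Type) [AddCommGroup A] [Module R A] [AddCommGroup B] [Module R B]
      [AddCommGroup C] [Module R C] (f : A →ₗ[R] B) (g : B →ₗ[R] C),
      Function.Injective f → Function.Surjective g →
      LinearMap.range f = LinearMap.ker g → IsStrictSub G (LinearMap.range f) →
      Mem Q A → Mem Q C → Mem Q B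

/-- `Y` lies in the right perpendicular class `X ⟂`: no nonzero strict morphism
from an object of `X` to `Y`. -/
def MemRightPerp (G X : ModuleCat.{0} R → Prop) (Y : Type) [AddCommGroup Y] [Module R Y] : Prop :=
  Mem G Y ∧ ∀ M : ModuleCat.{0} R, X M → ∀ f : M →ₗ[R] Y, IsStrictMorphism G f → f = 0

/-- `M` lies in the left perpendicular class `⟂ Y`. -/
def MemLeftPerp (G Y : ModuleCat.{0} R → Prop) (M : Type) [AddCommGroup M] [Module R M] : Prop :=
  Mem G M ∧ ∀ N : ModuleCat.{0} R, Y N → ∀ f : M →ₗ[R] N, IsStrictMorphism G f → f = 0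

/-- A pseudo-wide subcategory `W` of `G`. -/
structure IsPseudoWide (G W : ModuleCat.{0} R → Prop) : Prop where
  subset : ∀ M : ModuleCat.{0} R, W M → G M
  zero_mem : ∀ (M : Type) [AddCommGroup M] [Module R M], Subsingleton M → Mem G M → Mem W M
  kic : ∀ (A B : Type) [AddCommGroup A] [Module R A] [AddCommGroup B] [Module R B],
      Mem W A → Mem W B → ∀ f : A →ₗ[R] B, IsStrictMorphism G f →
      Mem W ↥(LinearMap.ker f) ∧ Mem W ↥(LinearMap.range f) ∧
        Mem W (B ⧸ LinearMap.range f)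
  ext_closed : ∀ (A B C : Type) [AddCommGroup A] [Module R A] [AddCommGroup B] [Module R B]
      [AddCommGroup C] [Module R C] (f : A →ₗ[R] B) (g : B →ₗ[R] C),
      Function.Injective f → Function.Surjective g →
      LinearMap.range f = LinearMap.ker g → IsStrictSub G (LinearMap.range f) →
      Mem W A → Mem W C → Mem W B

/-- A stability condition: a real-valued function on modules, invariant under
isomorphism and additive on short exact sequences of finitely generated modules
(this is exactly a functional on `K₀Λ` applied to dimension vectors). -/
structure StabilityCondition (R : Type) [Ring R] : Type 1 where
  val : ModuleCat.{0} R → ℝ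
  iso_inv : ∀ (M N : ModuleCat.{0} R), (↥M ≃ₗ[R] ↥N) → val M = val N
  additive : ∀ (M : ModuleCat.{0} R), Module.Finite R ↥M → ∀ A : Submodule R ↥M,
      val (ModuleCat.of R ↥A) + val (ModuleCat.of R (↥M ⧸ A)) = val M

/-- The value `θ(M)` of a stability condition on a module. -/
def StabilityCondition.app (θ : StabilityCondition R) (M : Type) [AddCommGroup M]
    [Module R M] : ℝ :=
  θ.val (ModuleCat.of R M)

/-- `𝒫(θ)`: objects which are zero, or on which `θ` is positive together with
all nonzero strict quotients. -/
def memP (G : ModuleCat.{0} R → Prop) (θ : StabilityCondition R)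
    (M : Type) [AddCommGroup M] [Module R M] : Prop :=
  Mem G M ∧ (Subsingleton M ∨ (0 < θ.app M ∧
    ∀ A : Submodule R M, IsStrictSub G A → A ≠ ⊤ → 0 < θ.app (M ⧸ A)))

/-- `𝒫̄(θ)`: `θ` is nonnegative on the object and all its strict quotients. -/
def memPbar (G : ModuleCat.{0} R → Prop) (θ : StabilityCondition R)
    (M : Type) [AddCommGroup M] [Module R M] : Prop :=
  Mem G M ∧ 0 ≤ θ.app M ∧ ∀ A : Submodule R M, IsStrictSub G A → 0 ≤ θ.app (M ⧸ A)

/-- `𝒬(θ)`: objects which are zero, or on which `θ` is negative together with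
all nonzero strict subobjects. -/
def memQ (G : ModuleCat.{0} R → Prop) (θ : StabilityCondition R)
    (M : Type) [AddCommGroup M] [Module R M] : Prop :=
  Mem G M ∧ (Subsingleton M ∨ (θ.app M < 0 ∧
    ∀ A : Submodule R M, IsStrictSub G A → A ≠ ⊥ → θ.app ↥A < 0))

/-- `𝒬̄(θ)`: `θ` is nonpositive on the object and all its strict subobjects. -/
def memQbar (G : ModuleCat.{0} R → Prop) (θ : StabilityCondition R)
    (M : Type) [AddCommGroup M] [Module R M] : Prop :=
  Mem G M ∧ θ.app M ≤ 0 ∧ ∀ A : Submodule R M, IsStrictSub G A → θ.app ↥A ≤ 0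

/-- `𝒲(θ)`: θ-semistable objects of `G`; equivalently `θ ∈ D_𝒢(M)`. -/
def memW (G : ModuleCat.{0} R → Prop) (θ : StabilityCondition R)
    (M : Type) [AddCommGroup M] [Module R M] : Prop :=
  Mem G M ∧ θ.app M = 0 ∧ ∀ A : Submodule R M, IsStrictSub G A → θ.app ↥A ≤ 0

/-- `𝒲₀(θ)`: objects of `𝒲(θ)` with no proper nonzero strict subobject in `𝒲(θ)`. -/
def memW0 (G : ModuleCat.{0} R → Prop) (θ : StabilityCondition R)
    (M : Type) [AddCommGroup M] [Module R M] : Prop :=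
  memW G θ M ∧ ∀ A : Submodule R M, IsStrictSub G A → memW G θ ↥A → A = ⊥ ∨ A = ⊤

/-- The linear path `θ_t = t·θ₁ + (1-t)·θ₀` in the stability space. -/
def lineSeg (θ₀ θ₁ : StabilityCondition R) (t : ℝ) : StabilityCondition R where
  val M := t * θ₁.val M + (1 - t) * θ₀.val M
  iso_inv M N e := by (try dsimp only); rw [θ₁.iso_inv M N e, θ₀.iso_inv M N e]
  additive M hM A := by
    have h1 := θ₁.additive M hM A
    have h0 := θ₀.additive M hM A
    try dsimp only
    linear_combination t * h1 + (1 - t) * h0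

/-- A smooth green path in the stability space. -/
structure IsGreenPath (G : ModuleCat.{0} R → Prop) (θ : ℝ → StabilityCondition R) : Prop where
  smooth : ∀ M : ModuleCat.{0} R, ContDiff ℝ (⊤ : ℕ∞) fun t => (θ t).val M
  green : ∀ (t : ℝ) (M : ModuleCat.{0} R), ¬Subsingleton ↥M → memW G (θ t) ↥M →
      0 < deriv (fun s => (θ s).val M) t
  eventually_pos : ∃ T : ℝ, ∀ t : ℝ, T < t → ∀ M : ModuleCat.{0} R, G M →
      ¬Subsingleton ↥M → 0 < (θ t).val M
  eventually_neg : ∃ T : ℝ, ∀ t : ℝ, t < T → ∀ M : ModuleCat.{0} R, G M →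
      ¬Subsingleton ↥M → (θ t).val M < 0

/-- A filtration `M = c 0 ⊃ c 1 ⊃ ⋯ ⊃ c m = 0` by strict subobjects whose
subquotients `c k / c (k+1)` lie in the slices `W (t k)` with `t` strictly
decreasing. -/
def IsSliceFiltration (G : ModuleCat.{0} R → Prop) {S : Type} [Preorder S]
    (W : S → ModuleCat.{0} R → Prop) {M : Type} [AddCommGroup M] [Module R M]
    (m : ℕ) (t : Fin m → S) (c : Fin (m + 1) → Submodule R M) : Prop :=
  c 0 = ⊤ ∧ c (Fin.last m) = ⊥ ∧ StrictAnti c ∧ StrictAnti t ∧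
  (∀ i, IsStrictSub G (c i)) ∧
  ∀ k : Fin m, W (t k) (ModuleCat.of R
    (↥(c k.castSucc) ⧸ Submodule.comap (c k.castSucc).subtype (c k.succ)))

/-- A strict HN-stratification of `G`: slices are pseudo-wide subcategories
indexed by a totally ordered set, with no nonzero strict morphisms backwards,
such that every object of `G` has a strict filtration with subquotients in
decreasing slices. -/
structure IsHNStratification (G : ModuleCat.{0} R → Prop) {S : Type} [LinearOrder S]
    (W : S → ModuleCat.{0} R → Prop) : Prop where
  wide : ∀ s : S, IsPseudoWide G (W s)
  no_backward : ∀ s₀ s₁ : S, s₀ < s₁ → ∀ X Y : ModuleCat.{0} R, W s₀ X → W s₁ Y →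
      ∀ f : X →ₗ[R] Y, IsStrictMorphism G f → f = 0
  filt : ∀ M : ModuleCat.{0} R, G M → ∃ (m : ℕ) (t : Fin m → S)
      (c : Fin (m + 1) → Submodule R ↥M), IsSliceFiltration G W m t c


/-- Linear equivalence between any two subsingleton modules. -/
def subsingletonEquiv (M N : Type) [AddCommGroup M] [Module R M] [AddCommGroup N] [Module R N]
    [Subsingleton M] [Subsingleton N] : M ≃ₗ[R] N where
  toFun _ := 0
  invFun _ := 0
  map_add' _ _ := Subsingleton.elim _ _
  map_smul' _ _ := Subsingleton.elim _ _
  left_inv _ := Subsingleton.elim _ _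
  right_inv _ := Subsingleton.elim _ _

lemma theta_app_eq (θ : StabilityCondition R) {M N : Type} [AddCommGroup M] [Module R M]
    [AddCommGroup N] [Module R N] (e : M ≃ₗ[R] N) : θ.app M = θ.app N :=
  θ.iso_inv (ModuleCat.of R M) (ModuleCat.of R N) e

lemma theta_app_subsingleton (θ : StabilityCondition R) (M : Type) [AddCommGroup M]
    [Module R M] (h : Subsingleton M) : θ.app M = 0 := by
  have h1 := θ.additive (ModuleCat.of R R) (Module.Finite.self R) (⊥ : Submodule R R)
  have e : (R ⧸ (⊥ : Submodule R R)) ≃ₗ[R] R := Submodule.quotEquivOfEqBot _ rfl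
  have h2 : θ.app (R ⧸ (⊥ : Submodule R R)) = θ.app R := theta_app_eq θ e
  have hbot : θ.app ↥(⊥ : Submodule R R) = 0 := by
    have : θ.app ↥(⊥ : Submodule R R) + θ.app (R ⧸ (⊥ : Submodule R R)) = θ.app R := h1
    linarith
  have e2 : M ≃ₗ[R] ↥(⊥ : Submodule R R) := subsingletonEquiv M _
  rw [theta_app_eq θ e2, hbot]

lemma theta_additive' (θ : StabilityCondition R) (M : Type) [AddCommGroup M] [Module R M]
    (hM : Module.Finite R M) (A : Submodule R M) :
    θ.app ↥A + θ.app (M ⧸ A) = θ.app M :=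
  θ.additive (ModuleCat.of R M) hM A

lemma strictSub_bot {G : ModuleCat.{0} R → Prop} (hG : IsTorsionClass G) (Y : Type)
    [AddCommGroup Y] [Module R Y] : IsStrictSub G (⊥ : Submodule R Y) := by
  refine ⟨hG.zero_mem _ inferInstance, fun B' _ => hG.zero_mem _ ?_⟩
  have : ((⊥ : Submodule R Y) ⊓ B') = ⊥ := bot_inf_eq B'
  rw [this]; infer_instance

lemma strictSub_top {G : ModuleCat.{0} R → Prop} (hG : IsTorsionClass G) {Y : Type}
    [AddCommGroup Y] [Module R Y] (hY : Mem G Y) : IsStrictSub G (⊤ : Submodule R Y) := by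
  refine ⟨hG.iso_closed _ _ Submodule.topEquiv.symm hY, fun B' hB' => ?_⟩
  exact hG.iso_closed _ _ (LinearEquiv.ofEq _ _ (top_inf_eq B')).symm hB'

lemma strictSub_trans {G : ModuleCat.{0} R → Prop} (hG : IsTorsionClass G) {Y : Type}
    [AddCommGroup Y] [Module R Y] {A : Submodule R Y} (hA : IsStrictSub G A)
    {B : Submodule R ↥A} (hB : IsStrictSub G B) :
    IsStrictSub G (Submodule.map A.subtype B) := by
  constructor
  · exact hG.iso_closed _ _ (Submodule.equivMapOfInjective _ A.injective_subtype B) hB.1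
  · intro B' hB'
    set C := Submodule.comap A.subtype B' with hCdef
    have hmapC : Submodule.map A.subtype C = A ⊓ B' := Submodule.map_comap_subtype A B'
    have hCmem : Mem G ↥C := by
      refine hG.iso_closed _ _ ?_ (hA.2 B' hB')
      exact ((Submodule.equivMapOfInjective _ A.injective_subtype C).trans
        (LinearEquiv.ofEq _ _ hmapC)).symm
    have key : Submodule.map A.subtype B ⊓ B' = Submodule.map A.subtype (B ⊓ C) := by
      rw [Submodule.map_inf _ A.injective_subtype, hmapC, ← inf_assoc,
        inf_eq_left.mpr (Submodule.map_subtype_le A B)]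
    refine hG.iso_closed _ _ ?_ (hB.2 C hCmem)
    exact (Submodule.equivMapOfInjective _ A.injective_subtype (B ⊓ C)).trans
      (LinearEquiv.ofEq _ _ key.symm)

theorem statement_13 (k : Type) [Field k] [Algebra k R] [FiniteDimensional k R]
    (G : ModuleCat.{0} R → Prop) (hG : IsTorsionClass G)
    (hfin : ∀ M : ModuleCat.{0} R, G M → Module.Finite R ↥M)
    (θ : StabilityCondition R)
    (Y : Type) [AddCommGroup Y] [Module R Y] (hY : Mem G Y) :
    memQbar G θ Y ↔ MemRightPerp G (fun N : ModuleCat.{0} R => memP G θ ↥N) Y := by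
  constructor
  · rintro ⟨hYG, hY0, hsub⟩
    refine ⟨hYG, ?_⟩
    rintro M ⟨hMG, hMp⟩ f hf
    by_contra hne
    have hMns : ¬Subsingleton ↥M := by
      intro h
      exact hne (by ext x; rw [Subsingleton.elim x 0]; simp)
    rcases hMp with h | ⟨hpos, hq⟩
    · exact hMns h
    · have hker : LinearMap.ker f ≠ ⊤ := fun h => hne (LinearMap.ker_eq_top.mp h)
      have h1 : 0 < θ.app (↥M ⧸ LinearMap.ker f) := hq _ hf.1 hker
      have h2 : θ.app (↥M ⧸ LinearMap.ker f) = θ.app ↥(LinearMap.range f) :=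
        theta_app_eq θ f.quotKerEquivRange
      have h3 : θ.app ↥(LinearMap.range f) ≤ 0 := hsub _ hf.2
      linarith
  · rintro ⟨hYG', hperp⟩
    have main : ∀ A : Submodule R Y, IsStrictSub G A → θ.app ↥A ≤ 0 := by
      by_contra hcon
      push_neg at hcon
      obtain ⟨A₀, hA₀, hA₀pos⟩ := hcon
      haveI : IsArtinianRing R := IsArtinianRing.of_finite k R
      haveI hYfin : Module.Finite R Y := hfin (ModuleCat.of R Y) hY
      haveI : IsArtinian R Y := isArtinian_of_fg_of_artinian'
      obtain ⟨A, hAmem, hmin⟩ := IsArtinian.set_has_minimal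
        {A : Submodule R Y | IsStrictSub G A ∧ 0 < θ.app ↥A} ⟨A₀, hA₀, hA₀pos⟩
      obtain ⟨hAs, hApos⟩ := hAmem
      haveI hAfin : Module.Finite R ↥A := hfin (ModuleCat.of R ↥A) hAs.1
      have hP : memP G θ ↥A := by
        refine ⟨hAs.1, Or.inr ⟨hApos, ?_⟩⟩
        intro B hB hBtop
        by_contra hle
        push_neg at hle
        have hadd : θ.app ↥B + θ.app (↥A ⧸ B) = θ.app ↥A := theta_additive' θ ↥A hAfin B
        have hBpos : 0 < θ.app ↥B := by linarith
        have hBY : IsStrictSub G (Submodule.map A.subtype B) := strictSub_trans hG hAs hB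
        have hlt : Submodule.map A.subtype B < A := by
          refine lt_of_le_of_ne (Submodule.map_subtype_le A B) ?_
          intro h
          apply hBtop
          have h2 := congrArg (Submodule.comap A.subtype) h
          rwa [Submodule.comap_map_eq_of_injective A.injective_subtype,
            Submodule.comap_subtype_self] at h2
        refine hmin _ ⟨hBY, ?_⟩ hlt
        rwa [← theta_app_eq θ (Submodule.equivMapOfInjective _ A.injective_subtype B)]
      have hAnt : ¬Subsingleton ↥A := fun h => by
        rw [theta_app_subsingleton θ _ h] at hApos; exact lt_irrefl 0 hApos
      have hstrict : IsStrictMorphism G A.subtype := by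
        constructor
        · rw [Submodule.ker_subtype]; exact strictSub_bot hG ↥A
        · rw [Submodule.range_subtype]; exact hAs
      have hzero : A.subtype = 0 := hperp (ModuleCat.of R ↥A) hP A.subtype hstrict
      rw [not_subsingleton_iff_nontrivial] at hAnt
      obtain ⟨x, y, hxy⟩ := hAnt
      apply hxy
      have hx : (x : Y) = 0 := LinearMap.ext_iff.mp hzero x
      have hy : (y : Y) = 0 := LinearMap.ext_iff.mp hzero y
      exact Subtype.ext (by rw [hx, hy])
    refine ⟨hY, ?_, main⟩
    have h := main ⊤ (strictSub_top hG hY)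
    rwa [theta_app_eq θ (Submodule.topEquiv (R := R) (M := Y))] at h


end PaperTC
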